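/- arXiv:1503.04644 — 5 statements merged into one kernel-verified Lean document; each statement's English description precedes it below -/
import Mathlib

section
/- Let m ≥ 2, 0 ≤ β < 1, let k(z) = z + ∑_{n≥2} k_n z^n be bi-univalent with k₂ ≠ 0 and k₃ ≠ 0, and let f(z) = z + ∑_{n≥2} a_n z^n belong to the class BR^k(m; β). Then |a₂| ≤ min{ √(m(1−β)/|k₃|) , m(1−β)/|k₂| }. -/
open MeasureTheory Set Metric Complex

noncomputable section

/-- The `n`-th MacLaurin coefficient of `f`, i.e. `f⁽ⁿ⁾(0)/n!`. -/
def mc (f : ℂ → ℂ) (n : ℕ) : ℂ := iteratedDeriv n f 0 / (n.factorial : ℂ)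

/-- The open unit disk in `ℂ`. -/
def unitDisk : Set ℂ := Metric.ball (0 : ℂ) 1

/-- The kernel `(1 - z e^{it})/(1 + z e^{it})`. -/
def pmKernel (z : ℂ) (t : ℝ) : ℂ :=
  (1 - z * Complex.exp (t * Complex.I)) / (1 + z * Complex.exp (t * Complex.I))

/-- The class `P_m` of functions with bounded boundary rotation: `p` is analytic on the unit
disk, `p 0 = 1`, and `p` is represented against a finite signed Borel measure
`μ = μp - μn` on `[0, 2π]` with `μ([0,2π]) = 1` and total variation `‖μ‖ ≤ m/2`. -/
def MemPm (m : ℝ) (p : ℂ → ℂ) : Prop :=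
  AnalyticOnNhd ℂ p unitDisk ∧ p 0 = 1 ∧
  ∃ μp μn : Measure ℝ, IsFiniteMeasure μp ∧ IsFiniteMeasure μn ∧
    (μp (Set.Icc 0 (2 * Real.pi))).toReal - (μn (Set.Icc 0 (2 * Real.pi))).toReal = 1 ∧
    (μp (Set.Icc 0 (2 * Real.pi))).toReal + (μn (Set.Icc 0 (2 * Real.pi))).toReal ≤ m / 2 ∧
    ∀ z ∈ unitDisk, p z =
      (∫ t in Set.Icc 0 (2 * Real.pi), pmKernel z t ∂μp) -
      (∫ t in Set.Icc 0 (2 * Real.pi), pmKernel z t ∂μn)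

/-- `p ∈ P_m(β)` iff `p = β + (1 - β) q` on the unit disk for some `q ∈ P_m`. -/
def MemPmBeta (m β : ℝ) (p : ℂ → ℂ) : Prop :=
  ∃ q : ℂ → ℂ, MemPm m q ∧ ∀ z ∈ unitDisk, p z = (β : ℂ) + (1 - (β : ℂ)) * q z

/-- `f` and `g` form a bi-univalent pair: `f` is analytic and injective on the unit disk with
`f 0 = 0`, `f' 0 = 1`, and `g` is the univalent analytic continuation of `f⁻¹` to the unit
disk: `g` is analytic and injective on the unit disk, `g 0 = 0`, and `f (g w) = w` for
`|w| < 1/4`. -/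
def BiUnivalentPair (f g : ℂ → ℂ) : Prop :=
  AnalyticOnNhd ℂ f unitDisk ∧ f 0 = 0 ∧ deriv f 0 = 1 ∧ Set.InjOn f unitDisk ∧
  AnalyticOnNhd ℂ g unitDisk ∧ Set.InjOn g unitDisk ∧ g 0 = 0 ∧
  ∀ w : ℂ, ‖w‖ < 1 / 4 → f (g w) = w

/-- MacLaurin coefficients of `(f ∗ k)(z)/z`: the constant term is `1` and the coefficient of
`z^n` for `n ≥ 1` is `a_{n+1} k_{n+1}`. -/
def brCoeff (f k : ℂ → ℂ) (n : ℕ) : ℂ := if n = 0 then 1 else mc f (n + 1) * mc k (n + 1)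

/-- The function `Φ(z) = 1 + ∑_{n≥2} a_n k_n z^{n-1}`, i.e. `(f ∗ k)(z)/z`. -/
def brFun (f k : ℂ → ℂ) (z : ℂ) : ℂ := ∑' n : ℕ, brCoeff f k n * z ^ n

/-- `f ∈ BR^k(m; β)`: `f` is bi-univalent with inverse `g`, and the series
`Φ(z) = 1 + ∑_{n≥2} a_n k_n z^{n-1}` and `Ψ(w) = 1 + ∑_{n≥2} b_n k_n w^{n-1}` converge on
the unit disk and define functions of class `P_m(β)`. -/
def MemBR (m β : ℝ) (k f g : ℂ → ℂ) : Prop :=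
  BiUnivalentPair f g ∧
  (∀ z ∈ unitDisk, Summable fun n : ℕ => brCoeff f k n * z ^ n) ∧
  (∀ w ∈ unitDisk, Summable fun n : ℕ => brCoeff g k n * w ^ n) ∧
  MemPmBeta m β (brFun f k) ∧ MemPmBeta m β (brFun g k)

/-!
Expanding `(1 - z e^{it})/(1 + z e^{it}) = 1 + 2 ∑_{n ≥ 1} (-z e^{it})^n` and integrating term by
term against the representing measure shows that every nonconstant Taylor coefficient of a
function in `P_m(β)` has modulus at most `m(1 - β)`. By uniqueness of power series this applies
to the coefficients `a_n k_n` of `Φ` and `b_n k_n` of `Ψ`; for `n = 2` it gives the second bound.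
Differentiating `f (g w) = w` three times at `0` gives `a₃ + b₃ = 2 a₂²`, whence
`2 |a₂|² |k₃| ≤ |a₃ k₃| + |b₃ k₃| ≤ 2 m (1 - β)`.
-/

open Filter Topology FormalMultilinearSeries
open scoped ENNReal

section PowerSeriesUniqueness

variable {𝕜 : Type*} [NontriviallyNormedField 𝕜]

theorem hasFPowerSeriesAt_ofScalars_of_hasSum {c : ℕ → 𝕜} {F : 𝕜 → 𝕜} {R : ℝ} (hR : 0 < R)
    (hc : ∀ z ∈ Metric.ball (0 : 𝕜) R, HasSum (fun n => c n * z ^ n) (F z)) :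
    HasFPowerSeriesAt F (ofScalars 𝕜 c) 0 := by
  obtain ⟨x, hx0, hxR⟩ := NormedField.exists_norm_lt 𝕜 hR
  have hradius : (‖x‖₊ : ℝ≥0∞) ≤ (ofScalars 𝕜 c).radius := by
    refine le_radius_of_tendsto _ (l := 0) ?_
    simpa [norm_mul, norm_pow] using
      (hc x (mem_ball_zero_iff.2 hxR)).summable.tendsto_atTop_zero.norm
  refine ⟨‖x‖₊, hradius, by simpa using hx0, fun {y} hy => ?_⟩
  have hyR : ‖y‖ < R := (by simpa using hy : ‖y‖ < ‖x‖).trans hxR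
  simpa [ofScalars_apply_eq, mul_comm] using hc y (mem_ball_zero_iff.2 hyR)

theorem eq_of_hasSum_mul_pow {a b : ℕ → 𝕜} {F : 𝕜 → 𝕜} {R : ℝ} (hR : 0 < R)
    (ha : ∀ z ∈ Metric.ball (0 : 𝕜) R, HasSum (fun n => a n * z ^ n) (F z))
    (hb : ∀ z ∈ Metric.ball (0 : 𝕜) R, HasSum (fun n => b n * z ^ n) (F z)) : a = b :=
  ofScalars_series_injective 𝕜 𝕜 <|
    (hasFPowerSeriesAt_ofScalars_of_hasSum hR ha).eq_formalMultilinearSeries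
      (hasFPowerSeriesAt_ofScalars_of_hasSum hR hb)

end PowerSeriesUniqueness

section HerglotzKernel

def pmKernelCoeff (n : ℕ) : ℂ := if n = 0 then 1 else 2 * (-1) ^ n

theorem norm_pmKernelCoeff_le (n : ℕ) : ‖pmKernelCoeff n‖ ≤ 2 := by
  unfold pmKernelCoeff
  split_ifs <;> norm_num

theorem hasSum_pmKernelCoeff_mul_pow {w : ℂ} (hw : ‖w‖ < 1) :
    HasSum (fun n => pmKernelCoeff n * w ^ n) ((1 - w) / (1 + w)) := by
  have hw' : 1 + w ≠ 0 := by
    intro h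
    simp [eq_neg_of_add_eq_zero_right h] at hw
  have hgeom := ((hasSum_geometric_of_norm_lt_one (ξ := -w) (by simpa using hw)).mul_left 2).sub
    (hasSum_ite_eq 0 (1 : ℂ))
  have hsum : (1 - w) / (1 + w) = 2 * (1 - -w)⁻¹ - 1 := by
    rw [sub_neg_eq_add]
    field_simp
    ring
  rw [hsum]
  refine hgeom.congr_fun fun n => ?_
  rcases n with _ | n
  · norm_num [pmKernelCoeff]
  · rw [pmKernelCoeff, if_neg n.succ_ne_zero, if_neg n.succ_ne_zero, neg_pow]
    ring

theorem hasSum_pmKernel {z : ℂ} (hz : ‖z‖ < 1) (t : ℝ) :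
    HasSum (fun n => pmKernelCoeff n * z ^ n * exp (t * I) ^ n) (pmKernel z t) := by
  simpa [pmKernel, mul_pow, mul_assoc] using
    hasSum_pmKernelCoeff_mul_pow (w := z * exp (t * I)) (by simpa using hz)

theorem norm_integral_exp_mul_I_pow_le (μ : Measure ℝ) [IsFiniteMeasure μ] (n : ℕ) :
    ‖∫ t, exp (t * I) ^ n ∂μ‖ ≤ μ.real univ := by
  simpa using norm_integral_le_of_norm_le_const (μ := μ) (C := 1)
    (f := fun t : ℝ => exp (t * I) ^ n) (ae_of_all _ fun t => by simp)

theorem hasSum_integral_pmKernel (μ : Measure ℝ) [IsFiniteMeasure μ] {z : ℂ} (hz : ‖z‖ < 1) :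
    HasSum (fun n => pmKernelCoeff n * (∫ t, exp (t * I) ^ n ∂μ) * z ^ n)
      (∫ t, pmKernel z t ∂μ) := by
  set F : ℕ → ℝ → ℂ := fun n t => pmKernelCoeff n * z ^ n * exp (t * I) ^ n
  have hF_norm : ∀ n t, ‖F n t‖ = ‖pmKernelCoeff n‖ * ‖z‖ ^ n := by simp [F]
  have hF_int : ∀ n, Integrable (F n) μ := fun n =>
    (integrable_const (‖pmKernelCoeff n‖ * ‖z‖ ^ n)).mono' (by fun_prop)
      (ae_of_all _ fun t => (hF_norm n t).le)
  have hF_sum : Summable fun n => ∫ t, ‖F n t‖ ∂μ := by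
    simp_rw [hF_norm, integral_const, smul_eq_mul]
    refine Summable.mul_left _ (.of_nonneg_of_le (fun n => by positivity) (fun n => ?_)
      ((summable_geometric_of_lt_one (norm_nonneg z) hz).mul_left 2))
    exact mul_le_mul_of_nonneg_right (norm_pmKernelCoeff_le n) (by positivity)
  have hF_tsum : ∫ t, pmKernel z t ∂μ = ∫ t, ∑' n, F n t ∂μ :=
    integral_congr_ae (ae_of_all _ fun t => (hasSum_pmKernel hz t).tsum_eq.symm)
  rw [hF_tsum]
  refine (hasSum_integral_of_summable_integral_norm hF_int hF_sum).congr_fun fun n => ?_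
  rw [integral_const_mul]
  ring

end HerglotzKernel

section CoefficientBounds

variable {m β : ℝ} {p : ℂ → ℂ}

theorem MemPm.exists_hasSum_coeff_le (h : MemPm m p) :
    ∃ c : ℕ → ℂ, (∀ n, ‖c (n + 1)‖ ≤ m) ∧
      ∀ z ∈ unitDisk, HasSum (fun n => c n * z ^ n) (p z) := by
  obtain ⟨-, -, μp, μn, _, _, -, hvar, hrep⟩ := h
  set s := Icc 0 (2 * Real.pi)
  let moment (μ : Measure ℝ) (n : ℕ) : ℂ := ∫ t in s, exp (t * I) ^ n ∂μ
  refine ⟨fun n => pmKernelCoeff n * (moment μp n - moment μn n), fun n => ?_, fun z hz => ?_⟩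
  · have hmoment : ‖moment μp (n + 1) - moment μn (n + 1)‖ ≤ μp.real s + μn.real s := by
      refine (norm_sub_le _ _).trans (add_le_add ?_ ?_)
      · simpa using norm_integral_exp_mul_I_pow_le (μp.restrict s) (n + 1)
      · simpa using norm_integral_exp_mul_I_pow_le (μn.restrict s) (n + 1)
    calc ‖pmKernelCoeff (n + 1) * (moment μp (n + 1) - moment μn (n + 1))‖
        ≤ 2 * (μp.real s + μn.real s) := by
          rw [norm_mul]
          exact mul_le_mul (norm_pmKernelCoeff_le _) hmoment (norm_nonneg _) zero_le_two
      _ ≤ m := by rw [measureReal_def, measureReal_def]; linarith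
  · have hz' : ‖z‖ < 1 := mem_ball_zero_iff.1 hz
    rw [hrep z hz]
    exact ((hasSum_integral_pmKernel _ hz').sub (hasSum_integral_pmKernel _ hz')).congr_fun
      fun n => by ring

theorem MemPmBeta.exists_hasSum_coeff_le (h : MemPmBeta m β p) :
    ∃ c : ℕ → ℂ, (∀ n, ‖c (n + 1)‖ ≤ m * |1 - β|) ∧
      ∀ z ∈ unitDisk, HasSum (fun n => c n * z ^ n) (p z) := by
  obtain ⟨q, hq, hpq⟩ := h
  obtain ⟨c, hc, hcq⟩ := hq.exists_hasSum_coeff_le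
  refine ⟨fun n => (if n = 0 then (β : ℂ) else 0) + (1 - β) * c n, fun n => ?_, fun z hz => ?_⟩
  · have hβ : ‖(1 : ℂ) - β‖ = |1 - β| := by
      rw [← ofReal_one, ← ofReal_sub, norm_real, Real.norm_eq_abs]
    dsimp only
    rw [if_neg n.succ_ne_zero, zero_add, norm_mul, hβ, mul_comm]
    exact mul_le_mul_of_nonneg_right (hc n) (abs_nonneg _)
  · rw [hpq z hz]
    refine ((hasSum_ite_eq 0 (β : ℂ)).add ((hcq z hz).mul_left (1 - (β : ℂ)))).congr_fun fun n => ?_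
    rcases n with _ | n
    · simp
    · simp only [n.succ_ne_zero, if_false]
      ring

theorem MemPmBeta.norm_coeff_succ_le (h : MemPmBeta m β p) {c : ℕ → ℂ}
    (hc : ∀ z ∈ unitDisk, HasSum (fun n => c n * z ^ n) (p z)) (n : ℕ) :
    ‖c (n + 1)‖ ≤ m * |1 - β| := by
  obtain ⟨d, hd, hdp⟩ := h.exists_hasSum_coeff_le
  rw [eq_of_hasSum_mul_pow one_pos hc hdp]
  exact hd n

end CoefficientBounds

section InverseFunctionDerivatives

variable {𝕜 : Type*} [NontriviallyNormedField 𝕜]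

theorem Filter.EventuallyEq.eventuallyEq_of_hasDerivAt {φ ψ φ' ψ' : 𝕜 → 𝕜} {x : 𝕜}
    (h : φ =ᶠ[𝓝 x] ψ) (hφ : ∀ᶠ y in 𝓝 x, HasDerivAt φ (φ' y) y)
    (hψ : ∀ᶠ y in 𝓝 x, HasDerivAt ψ (ψ' y) y) : φ' =ᶠ[𝓝 x] ψ' := by
  filter_upwards [h.eventuallyEq_nhds, hφ, hψ] with y hy hφy hψy
  exact hφy.unique (hψy.congr_of_eventuallyEq hy)

variable [CompleteSpace 𝕜]

theorem AnalyticAt.eventually_hasDerivAt_iteratedDeriv {f : 𝕜 → 𝕜} {x : 𝕜}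
    (hf : AnalyticAt 𝕜 f x) (n : ℕ) :
    ∀ᶠ y in 𝓝 x, HasDerivAt (iteratedDeriv n f) (iteratedDeriv (n + 1) f y) y := by
  filter_upwards [hf.eventually_analyticAt] with y hy
  rw [iteratedDeriv_succ, iteratedDeriv_eq_iterate]
  exact (hy.iterated_deriv n).differentiableAt.hasDerivAt

theorem iteratedDeriv_relations_of_comp_eventuallyEq_id {f g : 𝕜 → 𝕜} {x : 𝕜}
    (hf : AnalyticAt 𝕜 f (g x)) (hg : AnalyticAt 𝕜 g x) (hfg : f ∘ g =ᶠ[𝓝 x] id) :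
    let a n := iteratedDeriv n f (g x)
    let b n := iteratedDeriv n g x
    a 1 * b 1 = 1 ∧ a 2 * b 1 ^ 2 + a 1 * b 2 = 0 ∧
      a 3 * b 1 ^ 3 + 3 * a 2 * b 1 * b 2 + a 1 * b 3 = 0 := by
  set F := fun n => iteratedDeriv n f
  set G := fun n => iteratedDeriv n g
  have hF n : ∀ᶠ y in 𝓝 x, HasDerivAt (F n) (F (n + 1) (g y)) (g y) :=
    hg.continuousAt.eventually (hf.eventually_hasDerivAt_iteratedDeriv n)
  have hG n : ∀ᶠ y in 𝓝 x, HasDerivAt (G n) (G (n + 1) y) y :=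
    hg.eventually_hasDerivAt_iteratedDeriv n
  have h₁ : (fun y => F 1 (g y) * G 1 y) =ᶠ[𝓝 x] fun _ => 1 := by
    refine hfg.eventuallyEq_of_hasDerivAt ?_ (.of_forall hasDerivAt_id)
    filter_upwards [hF 0, hG 0] with y hFy hGy
    simpa [F, G] using hFy.comp y hGy
  have h₂ : (fun y => F 2 (g y) * G 1 y ^ 2 + F 1 (g y) * G 2 y) =ᶠ[𝓝 x] fun _ => 0 := by
    refine h₁.eventuallyEq_of_hasDerivAt ?_ (.of_forall fun y => hasDerivAt_const y 1)
    filter_upwards [hF 1, hG 0, hG 1] with y hF₁ hG₀ hG₁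
    exact ((hF₁.comp y hG₀).mul hG₁).congr_deriv (by simp only [Function.comp_apply]; ring)
  have h₃ : F 3 (g x) * G 1 x ^ 3 + 3 * F 2 (g x) * G 1 x * G 2 x + F 1 (g x) * G 3 x = 0 := by
    refine (h₂.eventuallyEq_of_hasDerivAt (φ' := fun y =>
      F 3 (g y) * G 1 y ^ 3 + 3 * F 2 (g y) * G 1 y * G 2 y + F 1 (g y) * G 3 y) ?_
      (.of_forall fun y => hasDerivAt_const y 0)).eq_of_nhds
    filter_upwards [hF 1, hF 2, hG 0, hG 1, hG 2] with y hF₁ hF₂ hG₀ hG₁ hG₂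
    exact (((hF₂.comp y hG₀).mul (hG₁.pow 2)).add ((hF₁.comp y hG₀).mul hG₂)).congr_deriv
      (by simp only [Function.comp_apply, Pi.pow_apply]; push_cast; ring)
  exact ⟨h₁.eq_of_nhds, h₂.eq_of_nhds, h₃⟩

end InverseFunctionDerivatives

theorem mc_three_add_mc_three_of_comp_eventuallyEq_id {f g : ℂ → ℂ} (hf : AnalyticAt ℂ f 0)
    (hg : AnalyticAt ℂ g 0) (hg0 : g 0 = 0) (hf1 : deriv f 0 = 1) (hfg : f ∘ g =ᶠ[𝓝 0] id) :
    mc f 3 + mc g 3 = 2 * mc f 2 ^ 2 := by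
  obtain ⟨h₁, h₂, h₃⟩ :=
    iteratedDeriv_relations_of_comp_eventuallyEq_id (by rwa [hg0]) hg hfg
  simp only [hg0, iteratedDeriv_one, hf1, one_mul] at h₁ h₂ h₃
  simp only [h₁, one_pow, mul_one] at h₂ h₃
  simp only [mc, Nat.factorial]
  push_cast
  linear_combination h₃ / 6 - iteratedDeriv 2 f 0 * h₂ / 2

theorem BiUnivalentPair.mc_three_add_mc_three {f g : ℂ → ℂ} (h : BiUnivalentPair f g) :
    mc f 3 + mc g 3 = 2 * mc f 2 ^ 2 := by
  obtain ⟨hf, -, hf1, -, hg, -, hg0, hfg⟩ := h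
  have h0 : (0 : ℂ) ∈ unitDisk := mem_ball_self one_pos
  refine mc_three_add_mc_three_of_comp_eventuallyEq_id (hf 0 h0) (hg 0 h0) hg0 hf1 ?_
  filter_upwards [ball_mem_nhds (0 : ℂ) (by norm_num : (0 : ℝ) < 1 / 4)] with w hw
  exact hfg w (mem_ball_zero_iff.1 hw)

theorem BR_a2_bound_general (m β : ℝ) (hβ1 : β < 1) (k f g : ℂ → ℂ)
    (hk2 : mc k 2 ≠ 0) (hk3 : mc k 3 ≠ 0)
    (hf : MemBR m β k f g) :
    ‖mc f 2‖ ≤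
      min (Real.sqrt (m * (1 - β) / ‖mc k 3‖))
        (m * (1 - β) / ‖mc k 2‖) := by
  obtain ⟨hfg, hsf, hsg, hpf, hpg⟩ := hf
  have hβ : |1 - β| = 1 - β := abs_of_pos (by linarith)
  have hcf := hpf.norm_coeff_succ_le fun z hz => (hsf z hz).hasSum
  have hcg := hpg.norm_coeff_succ_le fun z hz => (hsg z hz).hasSum
  have ha₂ : ‖mc f 2‖ * ‖mc k 2‖ ≤ m * (1 - β) := by simpa [brCoeff, hβ] using hcf 0
  have ha₃ : ‖mc f 3 * mc k 3‖ ≤ m * (1 - β) := by simpa [brCoeff, hβ] using hcf 1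
  have hb₃ : ‖mc g 3 * mc k 3‖ ≤ m * (1 - β) := by simpa [brCoeff, hβ] using hcg 1
  have hsq : 2 * (‖mc f 2‖ ^ 2 * ‖mc k 3‖) ≤ 2 * (m * (1 - β)) := calc
    2 * (‖mc f 2‖ ^ 2 * ‖mc k 3‖) = ‖mc f 3 * mc k 3 + mc g 3 * mc k 3‖ := by
      rw [← add_mul, hfg.mc_three_add_mc_three]
      simp only [Complex.norm_mul, norm_ofNat, norm_pow]
      ring
    _ ≤ 2 * (m * (1 - β)) := (norm_add_le _ _).trans (by linarith)
  refine le_min (Real.le_sqrt_of_sq_le ?_) ?_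
  · rw [le_div_iff₀ (norm_pos_iff.2 hk3)]
    linarith
  · rwa [le_div_iff₀ (norm_pos_iff.2 hk2)]

/-- Theorem 2.1, bound for `|a₂|`. -/
theorem BR_a2_bound (m β : ℝ) (hm : 2 ≤ m) (hβ0 : 0 ≤ β) (hβ1 : β < 1)
    (k kinv f g : ℂ → ℂ) (hk : BiUnivalentPair k kinv)
    (hk2 : mc k 2 ≠ 0) (hk3 : mc k 3 ≠ 0)
    (hf : MemBR m β k f g) :
    ‖mc f 2‖ ≤
      min (Real.sqrt (m * (1 - β) / ‖mc k 3‖))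
        (m * (1 - β) / ‖mc k 2‖) :=
  BR_a2_bound_general m β hβ1 k f g hk2 hk3 hf
end
end

section
/- Let m ≥ 2, 0 ≤ β < 1, let k(z) = z + ∑_{n≥2} k_n z^n be bi-univalent with k₂ ≠ 0 and k₃ ≠ 0, and let f(z) = z + ∑_{n≥2} a_n z^n belong to the class BR^k(m; β). Then |2a₂² − a₃| ≤ m(1−β)/|k₃|. -/
/-! Differentiating `f (g w) = w` three times at `0` gives `b₃ = 2a₂² - a₃`, so the claim is a
bound for the coefficient `b₃ k₃` of `Ψ ∈ P_m(β)`. Expanding `(1 - w)/(1 + w) = 1 + 2 ∑_{n ≥ 1} (-w)ⁿ`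
under the integral, every non-constant Taylor coefficient of `q ∈ P_m` is `±2` times a difference
of trigonometric moments of the two measures, hence has modulus at most `2 · m/2 = m`; passing to
`β + (1 - β) q` multiplies the non-constant coefficients by `1 - β`. -/

open MeasureTheory Set Metric Complex

noncomputable section

open Filter Topology
open scoped NNReal

section ChainRule

variable {𝕜 : Type*} [NontriviallyNormedField 𝕜] {f g : 𝕜 → 𝕜} {x : 𝕜}

lemma deriv_comp_mul {h u : 𝕜 → 𝕜} (hh : DifferentiableAt 𝕜 h (g x))
    (hg : DifferentiableAt 𝕜 g x) (hu : DifferentiableAt 𝕜 u x) :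
    deriv (fun w => h (g w) * u w) x = deriv h (g x) * deriv g x * u x + h (g x) * deriv u x := by
  have hcomp : deriv (fun w => h (g w)) x = deriv h (g x) * deriv g x := deriv_comp x hh hg
  rw [deriv_fun_mul (c := fun w => h (g w)) (hh.comp x hg) hu, hcomp]

variable [CompleteSpace 𝕜]

lemma AnalyticAt.eventually_analyticAt_comp (hf : AnalyticAt 𝕜 f (g x)) (hg : AnalyticAt 𝕜 g x) :
    ∀ᶠ w in 𝓝 x, AnalyticAt 𝕜 f (g w) ∧ AnalyticAt 𝕜 g w :=
  (hg.continuousAt.tendsto.eventually hf.eventually_analyticAt).and hg.eventually_analyticAt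

lemma deriv_comp_eventuallyEq (hf : AnalyticAt 𝕜 f (g x)) (hg : AnalyticAt 𝕜 g x) :
    deriv (fun w => f (g w)) =ᶠ[𝓝 x] fun w => deriv f (g w) * deriv g w := by
  filter_upwards [hf.eventually_analyticAt_comp hg] with w ⟨hfw, hgw⟩
  exact deriv_comp w hfw.differentiableAt hgw.differentiableAt

lemma iteratedDeriv_two_comp_eventuallyEq (hf : AnalyticAt 𝕜 f (g x)) (hg : AnalyticAt 𝕜 g x) :
    iteratedDeriv 2 (fun w => f (g w)) =ᶠ[𝓝 x] fun w =>
      iteratedDeriv 2 f (g w) * deriv g w ^ 2 + deriv f (g w) * iteratedDeriv 2 g w := by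
  simp only [iteratedDeriv_succ, iteratedDeriv_zero]
  filter_upwards [(deriv_comp_eventuallyEq hf hg).deriv, hf.eventually_analyticAt_comp hg]
    with w hw ⟨hfw, hgw⟩
  rw [hw, deriv_comp_mul hfw.deriv.differentiableAt hgw.differentiableAt
    hgw.deriv.differentiableAt]
  ring

lemma iteratedDeriv_three_comp (hf : AnalyticAt 𝕜 f (g x)) (hg : AnalyticAt 𝕜 g x) :
    iteratedDeriv 3 (fun w => f (g w)) x = iteratedDeriv 3 f (g x) * deriv g x ^ 3 +
      3 * iteratedDeriv 2 f (g x) * deriv g x * iteratedDeriv 2 g x +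
      deriv f (g x) * iteratedDeriv 3 g x := by
  rw [iteratedDeriv_succ, (iteratedDeriv_two_comp_eventuallyEq hf hg).deriv_eq]
  simp only [iteratedDeriv_succ, iteratedDeriv_zero]
  have hf₁ := hf.deriv
  have hf₂ := hf₁.deriv
  have hg₁ := hg.deriv
  have hg₂ := hg₁.deriv
  rw [deriv_fun_add (f := fun w => deriv (deriv f) (g w) * deriv g w ^ 2)
      (g := fun w => deriv f (g w) * deriv (deriv g) w)
      ((hf₂.differentiableAt.comp x hg.differentiableAt).mul (hg₁.differentiableAt.pow 2))
      ((hf₁.differentiableAt.comp x hg.differentiableAt).mul hg₂.differentiableAt),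
    deriv_comp_mul (u := fun w => deriv g w ^ 2) hf₂.differentiableAt hg.differentiableAt
      (hg₁.differentiableAt.pow 2),
    deriv_comp_mul hf₁.differentiableAt hg.differentiableAt hg₂.differentiableAt,
    deriv_fun_pow hg₁.differentiableAt]
  push_cast
  ring

end ChainRule

lemma mc_three_eq_of_comp_eventuallyEq_id {f g : ℂ → ℂ} (hf : AnalyticAt ℂ f 0)
    (hg : AnalyticAt ℂ g 0) (hg0 : g 0 = 0) (hf1 : deriv f 0 = 1)
    (hfg : (fun w => f (g w)) =ᶠ[𝓝 0] id) :
    mc g 3 = 2 * mc f 2 ^ 2 - mc f 3 := by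
  rw [← hg0] at hf
  have hg₁ : deriv g 0 = 1 := by
    have h := hfg.iteratedDeriv_eq 1
    rw [iteratedDeriv_one, (deriv_comp_eventuallyEq hf hg).eq_of_nhds] at h
    simpa [iteratedDeriv_id, hg0, hf1] using h
  have hg₂ : iteratedDeriv 2 g 0 = -iteratedDeriv 2 f 0 := by
    have h := hfg.iteratedDeriv_eq 2
    rw [(iteratedDeriv_two_comp_eventuallyEq hf hg).eq_of_nhds] at h
    norm_num [iteratedDeriv_id, hg0, hf1, hg₁] at h
    linear_combination h
  have hg₃ : iteratedDeriv 3 g 0 = 3 * iteratedDeriv 2 f 0 ^ 2 - iteratedDeriv 3 f 0 := by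
    have h := hfg.iteratedDeriv_eq 3
    rw [iteratedDeriv_three_comp hf hg] at h
    norm_num [iteratedDeriv_id, hg0, hf1, hg₁, hg₂] at h
    linear_combination h
  simp only [mc, hg₃, Nat.factorial]
  push_cast
  ring

lemma BiUnivalentPair.mc_inv_three {f g : ℂ → ℂ} (h : BiUnivalentPair f g) :
    mc g 3 = 2 * mc f 2 ^ 2 - mc f 3 := by
  obtain ⟨hf, -, hf1, -, hg, -, hg0, hfg⟩ := h
  have h0 : (0 : ℂ) ∈ unitDisk := mem_ball_self one_pos
  refine mc_three_eq_of_comp_eventuallyEq_id (hf 0 h0) (hg 0 h0) hg0 hf1 ?_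
  filter_upwards [ball_mem_nhds (0 : ℂ) (by norm_num : (0 : ℝ) < 1 / 4)] with w hw
  exact hfg w (mem_ball_zero_iff.mp hw)

lemma hasFPowerSeriesOnBall_ofScalars_of_hasSum {c : ℕ → ℂ} {F : ℂ → ℂ} {r : ℝ≥0} (hr : 0 < r)
    (h : ∀ z ∈ ball (0 : ℂ) r, HasSum (fun n => c n * z ^ n) (F z)) :
    HasFPowerSeriesOnBall F (.ofScalars ℂ c) 0 r where
  r_le := by
    refine ENNReal.le_of_forall_nnreal_lt fun t ht => ?_
    refine FormalMultilinearSeries.le_radius_of_tendsto _ (l := 0) ?_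
    have ht' : (t : ℂ) ∈ ball (0 : ℂ) r := by simpa using ht
    simpa [FormalMultilinearSeries.ofScalars_norm] using (h _ ht').summable.tendsto_atTop_zero.norm
  r_pos := by simpa using hr
  hasSum hy := by
    rw [Metric.eball_coe] at hy
    simpa [FormalMultilinearSeries.ofScalars_apply_eq, mul_comm] using h _ hy

lemma coeff_eq_of_hasSum_pow {a b : ℕ → ℂ} {F : ℂ → ℂ} {r : ℝ≥0} (hr : 0 < r)
    (ha : ∀ z ∈ ball (0 : ℂ) r, HasSum (fun n => a n * z ^ n) (F z))
    (hb : ∀ z ∈ ball (0 : ℂ) r, HasSum (fun n => b n * z ^ n) (F z)) : a = b :=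
  FormalMultilinearSeries.ofScalars_series_injective ℂ ℂ
    ((hasFPowerSeriesOnBall_ofScalars_of_hasSum hr ha).hasFPowerSeriesAt.eq_formalMultilinearSeries
      (hasFPowerSeriesOnBall_ofScalars_of_hasSum hr hb).hasFPowerSeriesAt)

lemma hasSum_one_sub_div_one_add {w : ℂ} (hw : ‖w‖ < 1) :
    HasSum (fun n => (if n = 0 then 1 else 2) * (-w) ^ n) ((1 - w) / (1 + w)) := by
  have hw' : 1 + w ≠ 0 := fun h => by simp [eq_neg_of_add_eq_zero_right h] at hw
  have hgeom := hasSum_geometric_of_norm_lt_one (ξ := -w) (by rwa [norm_neg])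
  rw [show (1 - w) / (1 + w) = 2 * (1 - -w)⁻¹ - 1 by rw [sub_neg_eq_add]; field_simp; ring]
  refine ((hgeom.mul_left 2).sub (hasSum_ite_eq 0 (1 : ℂ))).congr_fun fun n => ?_
  rcases eq_or_ne n 0 with rfl | hn
  · norm_num
  · simp only [hn, if_false, sub_zero]

def trigMoment (μ : Measure ℝ) (s : Set ℝ) (n : ℕ) : ℂ := ∫ t in s, exp (t * I) ^ n ∂μ

lemma norm_trigMoment_le (μ : Measure ℝ) [IsFiniteMeasure μ] (s : Set ℝ) (n : ℕ) :
    ‖trigMoment μ s n‖ ≤ (μ s).toReal := by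
  simpa [trigMoment, measureReal_def] using
    norm_setIntegral_le_of_norm_le_const (C := 1) (measure_lt_top μ s)
      fun t _ => by simp [norm_exp_ofReal_mul_I]

lemma hasSum_setIntegral_pmKernel (μ : Measure ℝ) [IsFiniteMeasure μ] (s : Set ℝ) {z : ℂ}
    (hz : ‖z‖ < 1) :
    HasSum (fun n => (if n = 0 then 1 else 2) * (-z) ^ n * trigMoment μ s n)
      (∫ t in s, pmKernel z t ∂μ) := by
  have hlim : ∀ t : ℝ, HasSum (fun n => (if n = 0 then 1 else 2) * (-z) ^ n * exp (t * I) ^ n)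
      (pmKernel z t) := fun t =>
    (hasSum_one_sub_div_one_add (w := z * exp (t * I))
      (by rwa [norm_mul, norm_exp_ofReal_mul_I, mul_one])).congr_fun fun n => by
        rw [← neg_mul, mul_pow, mul_assoc]
  have hbound : ∀ (n : ℕ) (t : ℝ),
      ‖(if n = 0 then 1 else 2) * (-z) ^ n * exp (t * I) ^ n‖ ≤ 2 * ‖z‖ ^ n := fun n t => by
    rw [norm_mul, norm_mul, norm_pow, norm_pow, norm_neg, norm_exp_ofReal_mul_I, one_pow, mul_one]
    gcongr
    split_ifs <;> norm_num
  simpa only [trigMoment, integral_const_mul] using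
    hasSum_integral_of_dominated_convergence (μ := μ.restrict s) (fun n _ => 2 * ‖z‖ ^ n)
      (fun n => (by fun_prop : Continuous fun t : ℝ =>
        (if n = 0 then 1 else 2) * (-z) ^ n * exp (t * I) ^ n).aestronglyMeasurable)
      (fun n => ae_of_all _ (hbound n))
      (ae_of_all _ fun _ => (summable_geometric_of_lt_one (norm_nonneg z) hz).mul_left 2)
      (integrable_const _) (ae_of_all _ hlim)

lemma MemPm.exists_hasSum {m : ℝ} {q : ℂ → ℂ} (hq : MemPm m q) :
    ∃ e : ℕ → ℂ, (∀ n ≠ 0, ‖e n‖ ≤ m) ∧ ∀ z ∈ unitDisk, HasSum (fun n => e n * z ^ n) (q z) := by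
  obtain ⟨-, -, μp, μn, _, _, -, hvar, hrep⟩ := hq
  set s := Icc 0 (2 * Real.pi)
  refine ⟨fun n => (if n = 0 then 1 else 2) * (-1) ^ n * (trigMoment μp s n - trigMoment μn s n),
    fun n hn => ?_, fun z hz => ?_⟩
  · calc ‖(if n = 0 then 1 else 2) * (-1) ^ n * (trigMoment μp s n - trigMoment μn s n)‖
        = 2 * ‖trigMoment μp s n - trigMoment μn s n‖ := by simp [hn]
      _ ≤ 2 * ((μp s).toReal + (μn s).toReal) := by
        gcongr
        exact (norm_sub_le _ _).trans
          (add_le_add (norm_trigMoment_le _ _ _) (norm_trigMoment_le _ _ _))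
      _ ≤ m := by linarith
  · rw [hrep z hz]
    have hz' : ‖z‖ < 1 := mem_ball_zero_iff.mp hz
    refine ((hasSum_setIntegral_pmKernel μp s hz').sub
      (hasSum_setIntegral_pmKernel μn s hz')).congr_fun fun n => ?_
    rw [neg_pow z]
    ring

lemma MemPmBeta.exists_hasSum {m β : ℝ} {p : ℂ → ℂ} (hβ : β ≤ 1) (hp : MemPmBeta m β p) :
    ∃ e : ℕ → ℂ, (∀ n ≠ 0, ‖e n‖ ≤ m * (1 - β)) ∧
      ∀ z ∈ unitDisk, HasSum (fun n => e n * z ^ n) (p z) := by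
  obtain ⟨q, hq, hpq⟩ := hp
  obtain ⟨e, he, hsum⟩ := hq.exists_hasSum
  have hβ' : ‖(1 : ℂ) - β‖ = 1 - β := by
    rw [← ofReal_one, ← ofReal_sub, norm_real, Real.norm_of_nonneg (sub_nonneg.2 hβ)]
  refine ⟨fun n => (if n = 0 then (β : ℂ) else 0) + (1 - β) * e n, fun n hn => ?_, fun z hz => ?_⟩
  · dsimp only
    rw [if_neg hn, zero_add, norm_mul, hβ', mul_comm m]
    exact mul_le_mul_of_nonneg_left (he n hn) (sub_nonneg.2 hβ)
  · rw [hpq z hz]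
    refine ((hasSum_ite_eq 0 (β : ℂ)).add ((hsum z hz).mul_left (1 - (β : ℂ)))).congr_fun
      fun n => ?_
    rcases eq_or_ne n 0 with rfl | hn
    · simp
    · simp only [hn, if_false, zero_add]
      ring

lemma MemPmBeta.norm_coeff_le {m β : ℝ} {p : ℂ → ℂ} (hβ : β ≤ 1) (hp : MemPmBeta m β p)
    {c : ℕ → ℂ} (hc : ∀ z ∈ unitDisk, HasSum (fun n => c n * z ^ n) (p z)) {n : ℕ} (hn : n ≠ 0) :
    ‖c n‖ ≤ m * (1 - β) := by
  obtain ⟨e, he, hsum⟩ := hp.exists_hasSum hβ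
  rw [coeff_eq_of_hasSum_pow (r := 1) one_pos (fun z hz => hc z (by simpa [unitDisk] using hz))
    (fun z hz => hsum z (by simpa [unitDisk] using hz))]
  exact he n hn

theorem BR_2a2sq_sub_a3_bound_general (m β : ℝ) (hβ1 : β < 1)
    (k f g : ℂ → ℂ)
    (hk3 : mc k 3 ≠ 0)
    (hf : MemBR m β k f g) :
    ‖2 * mc f 2 ^ 2 - mc f 3‖ ≤ m * (1 - β) / ‖mc k 3‖ := by
  obtain ⟨hfg, -, hsum, -, hΨ⟩ := hf
  have hb : ‖brCoeff g k 2‖ ≤ m * (1 - β) :=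
    hΨ.norm_coeff_le hβ1.le (fun w hw => (hsum w hw).hasSum) two_ne_zero
  rw [brCoeff, if_neg two_ne_zero, hfg.mc_inv_three, norm_mul] at hb
  rwa [le_div_iff₀ (norm_pos_iff.mpr hk3)]

/-- Theorem 2.1, bound for `|2a₂² - a₃|`. -/
theorem BR_2a2sq_sub_a3_bound (m β : ℝ) (hm : 2 ≤ m) (hβ0 : 0 ≤ β) (hβ1 : β < 1)
    (k kinv f g : ℂ → ℂ) (hk : BiUnivalentPair k kinv)
    (hk2 : mc k 2 ≠ 0) (hk3 : mc k 3 ≠ 0)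
    (hf : MemBR m β k f g) :
    ‖2 * mc f 2 ^ 2 - mc f 3‖ ≤ m * (1 - β) / ‖mc k 3‖ :=
  BR_2a2sq_sub_a3_bound_general m β hβ1 k f g hk3 hf
end
end

section
/- Let m ≥ 2 and let f(z) = z + ∑_{n≥2} a_n z^n be bi-univalent with inverse g = f⁻¹. If the derivative f' belongs to the class P_m and g' belongs to the class P_m, then |a₂| ≤ √(m/3), |a₃| ≤ m/3, and |2a₂² − a₃| ≤ m/3. -/
open MeasureTheory Set Metric Complex

noncomputable section

/-!
Since `pmKernel z t = 2 / (1 + z e^{it}) - 1`, differentiating under the integral sign gives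
`|p⁽ⁿ⁾(0)| ≤ 2 n! ‖μ‖ ≤ n! m` for `p ∈ P_m`, i.e. `|a_n| ≤ m / n` whenever `f' ∈ P_m`.
Differentiating `f ∘ g = id` three times at `0` shows that the third coefficient of `g` is
`2 a₂² - a₃`, so `g' ∈ P_m` bounds it by `m / 3` as well, and then
`2 |a₂|² ≤ |2 a₂² - a₃| + |a₃| ≤ 2m / 3`.
-/

open Filter Topology

section Kernel

variable {z : ℂ} (t : ℝ)

lemma sub_norm_le_norm_one_add_mul_exp : 1 - ‖z‖ ≤ ‖1 + z * exp (t * I)‖ := by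
  simpa [norm_exp_ofReal_mul_I] using norm_sub_norm_le (1 : ℂ) (-(z * exp (t * I)))

lemma one_add_mul_exp_ne_zero (hz : ‖z‖ < 1) : 1 + z * exp (t * I) ≠ 0 :=
  norm_pos_iff.1 <| (sub_pos.2 hz).trans_le (sub_norm_le_norm_one_add_mul_exp t)

/-- The `n`-th complex derivative of `z ↦ 1 / (1 + z e^{it})`. -/
def invKernelDeriv (n : ℕ) (z : ℂ) (t : ℝ) : ℂ :=
  (-1) ^ n * n.factorial * exp (t * I) ^ n / (1 + z * exp (t * I)) ^ (n + 1)

lemma pmKernel_eq (hz : ‖z‖ < 1) : pmKernel z t = 2 * invKernelDeriv 0 z t - 1 := by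
  have := one_add_mul_exp_ne_zero t hz
  simp only [pmKernel, invKernelDeriv]
  field_simp
  ring

lemma hasDerivAt_invKernelDeriv (n : ℕ) (hz : ‖z‖ < 1) :
    HasDerivAt (invKernelDeriv n · t) (invKernelDeriv (n + 1) z t) z := by
  have hne := one_add_mul_exp_ne_zero t hz
  have hden : HasDerivAt (fun w => (1 + w * exp (t * I)) ^ (n + 1))
      ((n + 1 : ℕ) * (1 + z * exp (t * I)) ^ n * exp (t * I)) z := by
    simpa using (((hasDerivAt_id z).mul_const (exp (t * I))).const_add 1).fun_pow (n + 1)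
  refine ((hasDerivAt_const z ((-1) ^ n * n.factorial * exp (t * I) ^ n)).fun_div hden
    (pow_ne_zero _ hne)).congr_deriv ?_
  simp only [invKernelDeriv, Nat.factorial_succ]
  push_cast
  field_simp
  ring

lemma continuous_invKernelDeriv (n : ℕ) (hz : ‖z‖ < 1) : Continuous (invKernelDeriv n z) := by
  unfold invKernelDeriv
  fun_prop (disch := exact fun t => pow_ne_zero _ (one_add_mul_exp_ne_zero t hz))

lemma norm_invKernelDeriv_le (n : ℕ) (hz : ‖z‖ < 1) :
    ‖invKernelDeriv n z t‖ ≤ n.factorial / (1 - ‖z‖) ^ (n + 1) := by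
  simp only [invKernelDeriv, norm_div, norm_mul, norm_pow, norm_neg, norm_one, one_pow,
    one_mul, norm_exp_ofReal_mul_I, mul_one, Complex.norm_natCast]
  gcongr
  exact sub_norm_le_norm_one_add_mul_exp t

lemma norm_invKernelDeriv_zero (n : ℕ) : ‖invKernelDeriv n 0 t‖ = n.factorial := by
  simp [invKernelDeriv, norm_exp_ofReal_mul_I]

end Kernel

section Integral

variable {ν : Measure ℝ} [IsFiniteMeasure ν] {z : ℂ}

lemma integrable_invKernelDeriv (n : ℕ) (hz : ‖z‖ < 1) : Integrable (invKernelDeriv n z) ν :=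
  .of_bound (continuous_invKernelDeriv n hz).aestronglyMeasurable _
    (Eventually.of_forall fun t => norm_invKernelDeriv_le t n hz)

lemma integral_pmKernel (hz : ‖z‖ < 1) :
    ∫ t, pmKernel z t ∂ν = 2 * ∫ t, invKernelDeriv 0 z t ∂ν - ν.real univ := by
  simp_rw [pmKernel_eq _ hz]
  rw [integral_sub ((integrable_invKernelDeriv 0 hz).const_mul 2) (integrable_const 1),
    integral_const_mul, integral_const, real_smul, mul_one]

lemma norm_integral_invKernelDeriv_zero_le (n : ℕ) :
    ‖∫ t, invKernelDeriv n 0 t ∂ν‖ ≤ n.factorial * ν.real univ :=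
  norm_integral_le_of_norm_le_const <|
    Eventually.of_forall fun t => (norm_invKernelDeriv_zero t n).le

lemma hasDerivAt_integral_invKernelDeriv (n : ℕ) (hz : ‖z‖ < 1 / 2) :
    HasDerivAt (fun w => ∫ t, invKernelDeriv n w t ∂ν) (∫ t, invKernelDeriv (n + 1) z t ∂ν) z := by
  have hU : ball (0 : ℂ) (1 / 2) ∈ 𝓝 z := isOpen_ball.mem_nhds (mem_ball_zero_iff.2 hz)
  have hlt : ∀ w ∈ ball (0 : ℂ) (1 / 2), ‖w‖ < 1 := fun w hw =>
    (mem_ball_zero_iff.1 hw).trans (by norm_num)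
  have hbound : ∀ t, ∀ w ∈ ball (0 : ℂ) (1 / 2),
      ‖invKernelDeriv (n + 1) w t‖ ≤ (n + 1).factorial * 2 ^ (n + 2) := fun t w hw =>
    calc ‖invKernelDeriv (n + 1) w t‖ ≤ (n + 1).factorial / (1 - ‖w‖) ^ (n + 2) :=
          norm_invKernelDeriv_le t (n + 1) (hlt w hw)
      _ ≤ (n + 1).factorial / (1 / 2) ^ (n + 2) := by
          gcongr; linarith [mem_ball_zero_iff.1 hw]
      _ = (n + 1).factorial * 2 ^ (n + 2) := by rw [one_div, inv_pow, div_inv_eq_mul]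
  exact (hasDerivAt_integral_of_dominated_loc_of_deriv_le hU
    (eventually_of_mem hU fun w hw =>
      (continuous_invKernelDeriv n (hlt w hw)).aestronglyMeasurable)
    (integrable_invKernelDeriv n (hlt z (mem_of_mem_nhds hU)))
    (continuous_invKernelDeriv (n + 1) (hlt z (mem_of_mem_nhds hU))).aestronglyMeasurable
    (Eventually.of_forall hbound) (integrable_const _)
    (Eventually.of_forall fun t w hw => hasDerivAt_invKernelDeriv t n (hlt w hw))).2

end Integral

lemma eqOn_iteratedDeriv_of_hasDerivAt {𝕜 F : Type*} [NontriviallyNormedField 𝕜]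
    [NormedAddCommGroup F] [NormedSpace 𝕜 F] {U : Set 𝕜} (hU : IsOpen U) {Φ : ℕ → 𝕜 → F}
    (hΦ : ∀ n, ∀ z ∈ U, HasDerivAt (Φ n) (Φ (n + 1) z) z) (n : ℕ) :
    EqOn (iteratedDeriv n (Φ 0)) (Φ n) U := by
  induction n with
  | zero => simp [EqOn]
  | succ n ih =>
    intro z hz
    rw [iteratedDeriv_succ, (eventuallyEq_of_mem (hU.mem_nhds hz) ih).deriv_eq]
    exact (hΦ n z hz).deriv

theorem MemPm.norm_iteratedDeriv_le {m : ℝ} {p : ℂ → ℂ} (hp : MemPm m p) {n : ℕ} (hn : n ≠ 0) :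
    ‖iteratedDeriv n p 0‖ ≤ n.factorial * m := by
  obtain ⟨-, -, μp, μn, _, _, hmass, hvar, hrep⟩ := hp
  set s := Icc (0 : ℝ) (2 * Real.pi)
  set Φ : ℕ → ℂ → ℂ := fun k z =>
    2 * ((∫ t in s, invKernelDeriv k z t ∂μp) - ∫ t in s, invKernelDeriv k z t ∂μn)
  have hΦ : ∀ k, ∀ z ∈ ball (0 : ℂ) (1 / 2), HasDerivAt (Φ k) (Φ (k + 1) z) z := fun k z hz =>
    ((hasDerivAt_integral_invKernelDeriv k (mem_ball_zero_iff.1 hz)).sub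
      (hasDerivAt_integral_invKernelDeriv k (mem_ball_zero_iff.1 hz))).const_mul 2
  have hpΦ : p =ᶠ[𝓝 0] fun z => -1 + Φ 0 z := by
    filter_upwards [isOpen_ball.mem_nhds (mem_ball_self one_pos)] with z hz
    have hz' : ‖z‖ < 1 := mem_ball_zero_iff.1 hz
    rw [hrep z hz, integral_pmKernel hz', integral_pmKernel hz', measureReal_restrict_apply_univ,
      measureReal_restrict_apply_univ]
    have hmass' : ((μp s).toReal : ℂ) - (μn s).toReal = 1 := by exact_mod_cast hmass
    simp only [Φ, measureReal_def]
    linear_combination -hmass'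
  calc ‖iteratedDeriv n p 0‖ = ‖Φ n 0‖ := by
        rw [hpΦ.iteratedDeriv_eq, iteratedDeriv_const_add (Nat.pos_of_ne_zero hn),
          eqOn_iteratedDeriv_of_hasDerivAt isOpen_ball hΦ n (mem_ball_self (by norm_num))]
    _ ≤ 2 * (n.factorial * (μp s).toReal + n.factorial * (μn s).toReal) := by
        have hIp := norm_integral_invKernelDeriv_zero_le (ν := μp.restrict s) n
        have hIn := norm_integral_invKernelDeriv_zero_le (ν := μn.restrict s) n
        rw [measureReal_restrict_apply_univ, measureReal_def] at hIp hIn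
        simp only [Φ, norm_mul, Complex.norm_ofNat]
        gcongr
        exact (norm_sub_le _ _).trans (add_le_add hIp hIn)
    _ ≤ n.factorial * m := by
        have : (0 : ℝ) ≤ n.factorial := by positivity
        nlinarith

section Inverse

variable {𝕜 : Type*} [NontriviallyNormedField 𝕜]

lemma eventuallyEq_of_hasDerivAt_of_eventuallyEq {F : Type*} [NormedAddCommGroup F]
    [NormedSpace 𝕜 F] {φ ψ φ' ψ' : 𝕜 → F} {x : 𝕜} (h : φ =ᶠ[𝓝 x] ψ)
    (hφ : ∀ᶠ z in 𝓝 x, HasDerivAt φ (φ' z) z) (hψ : ∀ᶠ z in 𝓝 x, HasDerivAt ψ (ψ' z) z) :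
    φ' =ᶠ[𝓝 x] ψ' := by
  filter_upwards [h.eventuallyEq_nhds, hφ, hψ] with z hz hφz hψz
  exact hφz.unique (hψz.congr_of_eventuallyEq hz)

variable [CompleteSpace 𝕜]

theorem iteratedDeriv_three_of_comp_eq_id {f g : 𝕜 → 𝕜} (hf : AnalyticAt 𝕜 f 0)
    (hg : AnalyticAt 𝕜 g 0) (hg0 : g 0 = 0) (hf'0 : deriv f 0 = 1) (hfg : f ∘ g =ᶠ[𝓝 0] id) :
    iteratedDeriv 3 g 0 = 3 * iteratedDeriv 2 f 0 ^ 2 - iteratedDeriv 3 f 0 := by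
  have hD : ∀ {h : 𝕜 → 𝕜}, AnalyticAt 𝕜 h 0 → ∀ᶠ z in 𝓝 0, HasDerivAt h (deriv h z) z :=
    fun hh => hh.eventually_analyticAt.mono fun z hz => hz.differentiableAt.hasDerivAt
  have hDg : ∀ {h : 𝕜 → 𝕜}, AnalyticAt 𝕜 h 0 →
      ∀ᶠ z in 𝓝 0, HasDerivAt (fun w => h (g w)) (deriv h (g z) * deriv g z) z := by
    intro h hh
    have hgt : Tendsto g (𝓝 0) (𝓝 0) := by simpa [hg0] using hg.continuousAt.tendsto
    filter_upwards [hgt.eventually (hD hh), hD hg] with z hhz hgz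
    exact hhz.comp z hgz
  have h1 : (fun z => deriv f (g z) * deriv g z) =ᶠ[𝓝 0] fun _ => 1 :=
    eventuallyEq_of_hasDerivAt_of_eventuallyEq hfg (hDg hf)
      (Eventually.of_forall fun z => hasDerivAt_id z)
  have hg'0 : deriv g 0 = 1 := by simpa [hg0, hf'0] using h1.self_of_nhds
  have h2 : (fun z => deriv (deriv f) (g z) * deriv g z * deriv g z
      + deriv f (g z) * deriv (deriv g) z) =ᶠ[𝓝 0] fun _ => 0 := by
    refine eventuallyEq_of_hasDerivAt_of_eventuallyEq h1 ?_
      (Eventually.of_forall fun z => hasDerivAt_const z 1)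
    filter_upwards [hDg hf.deriv, hD hg.deriv] with z h₁ h₂
    exact h₁.mul h₂
  have h3 := (((hDg hf.deriv.deriv).self_of_nhds.mul (hD hg.deriv).self_of_nhds).mul
    (hD hg.deriv).self_of_nhds).add
      ((hDg hf.deriv).self_of_nhds.mul (hD hg.deriv.deriv).self_of_nhds)
  have h3' := h3.unique ((hasDerivAt_const 0 0).congr_of_eventuallyEq h2)
  have h2' : deriv (deriv f) 0 + deriv (deriv g) 0 = 0 := by
    simpa [hg0, hf'0, hg'0] using h2.self_of_nhds
  simp only [Pi.mul_apply, hg0, hf'0, hg'0] at h3'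
  simp only [iteratedDeriv_eq_iterate, Function.iterate_succ_apply', Function.iterate_zero_apply]
  linear_combination h3' - 3 * deriv (deriv f) 0 * h2'

end Inverse

lemma norm_mc_le_of_memPm_deriv {m : ℝ} {f : ℂ → ℂ} (hf : MemPm m (deriv f)) {n : ℕ}
    (hn : 2 ≤ n) : ‖mc f n‖ ≤ m / n := by
  obtain ⟨k, rfl⟩ : ∃ k, n = k + 1 := ⟨n - 1, by omega⟩
  have hk : k.factorial ≠ 0 := k.factorial_ne_zero
  calc ‖mc f (k + 1)‖ = ‖iteratedDeriv k (deriv f) 0‖ / ((k + 1) * k.factorial) := by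
        rw [mc, iteratedDeriv_succ', norm_div, Complex.norm_natCast, Nat.factorial_succ]
        push_cast
        ring
    _ ≤ k.factorial * m / ((k + 1) * k.factorial) := by
        gcongr
        exact hf.norm_iteratedDeriv_le (by omega)
    _ = m / (k + 1 : ℕ) := by
        push_cast
        field_simp

lemma mc_three_of_comp_eq_id {f g : ℂ → ℂ} (hf : AnalyticAt ℂ f 0) (hg : AnalyticAt ℂ g 0)
    (hg0 : g 0 = 0) (hf'0 : deriv f 0 = 1) (hfg : f ∘ g =ᶠ[𝓝 0] id) :
    mc g 3 = 2 * mc f 2 ^ 2 - mc f 3 := by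
  simp only [mc, iteratedDeriv_three_of_comp_eq_id hf hg hg0 hf'0 hfg]
  norm_num [Nat.factorial]
  ring

lemma norm_le_sqrt_of_norm_two_mul_sq_sub_le {a b : ℂ} {c : ℝ} (hab : ‖2 * a ^ 2 - b‖ ≤ c)
    (hb : ‖b‖ ≤ c) : ‖a‖ ≤ √c := by
  refine Real.le_sqrt_of_sq_le ?_
  have h := norm_add_le (2 * a ^ 2 - b) b
  rw [sub_add_cancel, norm_mul, norm_pow, Complex.norm_two] at h
  linarith

theorem BR_koebe_bounds_general (m : ℝ) (f g : ℂ → ℂ)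
    (hfg : BiUnivalentPair f g)
    (hf' : MemPm m (deriv f)) (hg' : MemPm m (deriv g)) :
    ‖mc f 2‖ ≤ Real.sqrt (m / 3) ∧
      ‖mc f 3‖ ≤ m / 3 ∧
      ‖2 * mc f 2 ^ 2 - mc f 3‖ ≤ m / 3 := by
  obtain ⟨hf, -, hf'0, -, hg, -, hg0, hinv⟩ := hfg
  have h0 : (0 : ℂ) ∈ unitDisk := mem_ball_self one_pos
  have hcomp : f ∘ g =ᶠ[𝓝 0] id := by
    filter_upwards [ball_mem_nhds (0 : ℂ) (by norm_num : (0 : ℝ) < 1 / 4)] with w hw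
    exact hinv w (mem_ball_zero_iff.1 hw)
  have ha₃ : ‖mc f 3‖ ≤ m / 3 := by
    exact_mod_cast norm_mc_le_of_memPm_deriv hf' (n := 3) (by norm_num)
  have hb₃ : ‖2 * mc f 2 ^ 2 - mc f 3‖ ≤ m / 3 := by
    rw [← mc_three_of_comp_eq_id (hf 0 h0) (hg 0 h0) hg0 hf'0 hcomp]
    exact_mod_cast norm_mc_le_of_memPm_deriv hg' (n := 3) (by norm_num)
  exact ⟨norm_le_sqrt_of_norm_two_mul_sq_sub_le hb₃ ha₃, ha₃, hb₃⟩

/-- Example 2.1: the case `k(z) = z/(1-z)²` of Corollary 2.1, i.e. `f' ∈ P_m` and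
`g' ∈ P_m`. -/
theorem BR_koebe_bounds (m : ℝ) (hm : 2 ≤ m) (f g : ℂ → ℂ)
    (hfg : BiUnivalentPair f g)
    (hf' : MemPm m (deriv f)) (hg' : MemPm m (deriv g)) :
    ‖mc f 2‖ ≤ Real.sqrt (m / 3) ∧
      ‖mc f 3‖ ≤ m / 3 ∧
      ‖2 * mc f 2 ^ 2 - mc f 3‖ ≤ m / 3 :=
  BR_koebe_bounds_general m f g hfg hf' hg'
end
end

section
/- Let 0 ≤ β < 1 and let f(z) = z + ∑_{n≥2} a_n z^n be bi-univalent with inverse g = f⁻¹, such that Re f'(z) > β for all z ∈ 𝔻 and Re g'(w) > β for all w ∈ 𝔻. Then |a₂| ≤ √(2(1−β)/3) if 0 ≤ β ≤ 1/3, and |a₂| ≤ 1 − β if 1/3 < β < 1. -/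
/-! Both `f'` and `g'` map the disk into the half-plane `Re > β`, so Carathéodory's lemma for that
half-plane gives `|f''(0)| ≤ 2(1-β)` and `|f'''(0)|, |g'''(0)| ≤ 4(1-β)`; it is proved by writing
`p = 1 + (p - 1 + 2(1-β)) ω` with a Schwarz function `ω`, whose second coefficient is controlled
by the Schwarz–Pick lemma. Differentiating `f ∘ g = id` three times at `0` gives
`g'''(0) = 3 f''(0)² - f'''(0)`, hence `3 |f''(0)|² ≤ |f'''(0)| + |g'''(0)| ≤ 8(1-β)`; as
`a₂ = f''(0)/2`, the two estimates give the two bounds. -/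

open MeasureTheory Set Metric Complex

noncomputable section

open Filter Topology ComplexConjugate

section Calculus

variable {𝕜 : Type*} [NontriviallyNormedField 𝕜] {x : 𝕜}

theorem iteratedDeriv_two_fun_mul {u v : 𝕜 → 𝕜} (hu : ContDiffAt 𝕜 2 u x)
    (hv : ContDiffAt 𝕜 2 v x) :
    iteratedDeriv 2 (fun z => u z * v z) x =
      iteratedDeriv 2 u x * v x + 2 * deriv u x * deriv v x + u x * iteratedDeriv 2 v x := by
  rw [iteratedDeriv_fun_mul hu hv]
  simp only [Finset.sum_range_succ, Finset.range_zero, Finset.sum_empty, Nat.choose,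
    Nat.reduceSub, iteratedDeriv_zero, iteratedDeriv_one]
  push_cast
  ring

theorem deriv_eq_one_and_iteratedDeriv_three_of_comp_eq_id {f g : 𝕜 → 𝕜}
    (hf : ContDiffAt 𝕜 3 f (g x)) (hg : ContDiffAt 𝕜 3 g x) (hfg : f ∘ g =ᶠ[𝓝 x] id)
    (hf' : deriv f (g x) = 1) :
    deriv g x = 1 ∧
      iteratedDeriv 3 g x = 3 * iteratedDeriv 2 f (g x) ^ 2 - iteratedDeriv 3 f (g x) := by
  have h1 := hfg.iteratedDeriv_eq 1
  have h2 := hfg.iteratedDeriv_eq 2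
  have h3 := hfg.iteratedDeriv_eq 3
  rw [iteratedDeriv_one, iteratedDeriv_one, deriv_comp x (hf.differentiableAt (by norm_num))
    (hg.differentiableAt (by norm_num)), hf'] at h1
  rw [iteratedDeriv_comp_two (hf.of_le (by norm_num)) (hg.of_le (by norm_num))] at h2
  rw [iteratedDeriv_comp_three hf hg] at h3
  simp only [iteratedDeriv_id, deriv_id, hf'] at h1 h2 h3
  norm_num at h1 h2 h3
  refine ⟨h1, ?_⟩
  rw [h1] at h2 h3
  linear_combination h3 - 3 * iteratedDeriv 2 f (g x) * h2

end Calculus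

theorem normSq_one_sub_conj_mul_sub_normSq_sub (a w : ℂ) :
    normSq (1 - conj a * w) - normSq (w - a) = (1 - normSq a) * (1 - normSq w) := by
  simp only [normSq_apply, sub_re, sub_im, one_re, one_im, mul_re, mul_im, conj_re, conj_im]
  ring

theorem one_sub_conj_mul_ne_zero {a w : ℂ} (ha : ‖a‖ < 1) (hw : ‖w‖ ≤ 1) :
    1 - conj a * w ≠ 0 := by
  refine sub_ne_zero.2 fun h => ?_
  have : ‖conj a * w‖ < 1 := by
    rw [norm_mul, norm_conj]; nlinarith [norm_nonneg a, norm_nonneg w]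
  rw [← h, norm_one] at this
  exact this.false

theorem norm_sub_div_one_sub_conj_mul_le_one {a w : ℂ} (ha : ‖a‖ < 1) (hw : ‖w‖ ≤ 1) :
    ‖(w - a) / (1 - conj a * w)‖ ≤ 1 := by
  have hden : 0 < ‖1 - conj a * w‖ := norm_pos_iff.2 (one_sub_conj_mul_ne_zero ha hw)
  rw [norm_div, div_le_one hden, ← sq_le_sq₀ (norm_nonneg _) hden.le, Complex.sq_norm,
    Complex.sq_norm, ← sub_nonneg, normSq_one_sub_conj_mul_sub_normSq_sub, ← Complex.sq_norm,
    ← Complex.sq_norm]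
  apply mul_nonneg <;> nlinarith [norm_nonneg a, norm_nonneg w]

theorem hasDerivAt_sub_div_one_sub_conj_mul {a : ℂ} (ha : ‖a‖ < 1) :
    HasDerivAt (fun w => (w - a) / (1 - conj a * w)) (1 - ‖a‖ ^ 2 : ℂ)⁻¹ a := by
  have hne : (1 - ‖a‖ ^ 2 : ℂ) ≠ 0 := by
    norm_cast; nlinarith [norm_nonneg a]
  have hden : 1 - conj a * a = (1 - ‖a‖ ^ 2 : ℂ) := by
    rw [mul_comm, mul_conj, normSq_eq_norm_sq]; push_cast; ring
  have h := ((hasDerivAt_id' a).sub_const a).fun_div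
    (((hasDerivAt_id' a).const_mul (conj a)).const_sub 1) (hden ▸ hne)
  refine h.congr_deriv ?_
  rw [hden, sub_self, zero_mul, sub_zero, one_mul, sq (1 - (‖a‖ : ℂ) ^ 2),
    div_mul_cancel_left₀ hne]

theorem norm_deriv_le_one_sub_sq_of_mapsTo_ball {h : ℂ → ℂ}
    (hd : DifferentiableOn ℂ h (ball 0 1)) (hm : MapsTo h (ball 0 1) (closedBall 0 1)) :
    ‖deriv h 0‖ ≤ 1 - ‖h 0‖ ^ 2 := by
  have h0 : (0 : ℂ) ∈ ball 0 1 := mem_ball_self one_pos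
  rcases (mem_closedBall_zero_iff.1 (hm h0)).lt_or_eq with ha | ha
  · set a := h 0
    set ψ := fun z => (h z - a) / (1 - conj a * h z)
    have hψ : HasDerivAt ψ ((1 - ‖a‖ ^ 2 : ℂ)⁻¹ * deriv h 0) 0 :=
      (hasDerivAt_sub_div_one_sub_conj_mul ha).comp 0
        (hd.differentiableAt (isOpen_ball.mem_nhds h0)).hasDerivAt
    have hψd : DifferentiableOn ℂ ψ (ball 0 1) :=
      (hd.sub_const a).div ((hd.const_mul _).const_sub 1) fun z hz =>
        one_sub_conj_mul_ne_zero ha (mem_closedBall_zero_iff.1 (hm hz))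
    have hψm : MapsTo ψ (ball 0 1) (closedBall (ψ 0) 1) := by
      intro z hz
      simpa [ψ, a] using
        norm_sub_div_one_sub_conj_mul_le_one ha (mem_closedBall_zero_iff.1 (hm hz))
    have := norm_deriv_le_one_of_mapsTo_ball hψd hψm one_pos
    have hpos : 0 < 1 - ‖a‖ ^ 2 := by nlinarith [norm_nonneg a]
    rwa [hψ.deriv, norm_mul, norm_inv, ← ofReal_pow, ← ofReal_one, ← ofReal_sub,
      Complex.norm_of_nonneg hpos.le, inv_mul_le_iff₀ hpos, mul_one] at this
  · have hconst : EqOn h (fun _ => h 0) (ball 0 1) :=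
      eqOn_of_isPreconnected_of_isMaxOn_norm (convex_ball 0 1).isPreconnected isOpen_ball hd h0
        fun z hz => by simpa [ha] using hm hz
    rw [(hconst.eventuallyEq_of_mem (isOpen_ball.mem_nhds h0)).deriv_eq, deriv_const, ha]
    norm_num

theorem norm_iteratedDeriv_two_le_of_mapsTo_ball {ω : ℂ → ℂ}
    (hd : DifferentiableOn ℂ ω (ball 0 1)) (h0 : ω 0 = 0)
    (hm : MapsTo ω (ball 0 1) (closedBall 0 1)) :
    ‖iteratedDeriv 2 ω 0‖ ≤ 2 * (1 - ‖deriv ω 0‖ ^ 2) := by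
  have hb : ball (0 : ℂ) 1 ∈ 𝓝 0 := ball_mem_nhds 0 one_pos
  set h := dslope ω 0
  have hhd : DifferentiableOn ℂ h (ball 0 1) := (differentiableOn_dslope hb).2 hd
  have hhm : MapsTo h (ball 0 1) (closedBall 0 1) := fun z hz => by
    simpa using norm_dslope_le_div_of_mapsTo_ball hd (by rwa [h0]) hz
  have hωh : ω = fun z => z * h z := funext fun z => by
    simpa [h0] using (sub_smul_dslope ω 0 z).symm
  have h2 : iteratedDeriv 2 ω 0 = 2 * deriv h 0 := by
    rw [hωh, iteratedDeriv_two_fun_mul contDiffAt_fun_id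
      ((hhd.analyticAt hb).contDiffAt)]
    simp [iteratedDeriv_fun_id]
  rw [h2, norm_mul, Complex.norm_two, ← dslope_same ω]
  have := norm_deriv_le_one_sub_sq_of_mapsTo_ball hhd hhm
  linarith

theorem norm_sub_one_lt_norm_sub_one_add_of_re_gt {β : ℝ} {p : ℂ} (hβ : β < 1)
    (hp : β < p.re) : ‖p - 1‖ < ‖p - 1 + (2 * (1 - β) : ℝ)‖ := by
  rw [← sq_lt_sq₀ (norm_nonneg _) (norm_nonneg _), Complex.sq_norm, Complex.sq_norm]
  simp only [normSq_apply, sub_re, sub_im, add_re, add_im, one_re, one_im, ofReal_re, ofReal_im]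
  nlinarith

theorem norm_deriv_le_and_norm_iteratedDeriv_two_le_of_re_gt {p : ℂ → ℂ} {β : ℝ} (hβ : β < 1)
    (hd : DifferentiableOn ℂ p (ball 0 1)) (h0 : p 0 = 1)
    (hre : ∀ z ∈ ball 0 1, β < (p z).re) :
    ‖deriv p 0‖ ≤ 2 * (1 - β) ∧ ‖iteratedDeriv 2 p 0‖ ≤ 4 * (1 - β) := by
  have hb : ball (0 : ℂ) 1 ∈ 𝓝 0 := ball_mem_nhds 0 one_pos
  set k : ℝ := 2 * (1 - β)
  have hden : ∀ z ∈ ball (0 : ℂ) 1, p z - 1 + k ≠ 0 := fun z hz =>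
    norm_pos_iff.1 ((norm_nonneg _).trans_lt
      (norm_sub_one_lt_norm_sub_one_add_of_re_gt hβ (hre z hz)))
  set ω := fun z => (p z - 1) / (p z - 1 + k)
  have hωd : DifferentiableOn ℂ ω (ball 0 1) :=
    (hd.sub_const 1).div ((hd.sub_const 1).add_const _) hden
  have hω0 : ω 0 = 0 := by simp [ω, h0]
  have hωm : MapsTo ω (ball 0 1) (closedBall 0 1) := fun z hz => by
    rw [mem_closedBall_zero_iff, norm_div, div_le_one (norm_pos_iff.2 (hden z hz))]
    exact (norm_sub_one_lt_norm_sub_one_add_of_re_gt hβ (hre z hz)).le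
  have hrel : p =ᶠ[𝓝 0] fun z => 1 + (p z - 1 + k) * ω z := by
    filter_upwards [hb] with z hz
    rw [mul_div_cancel₀ _ (hden z hz)]
    ring
  have hpa : ContDiffAt ℂ 2 p 0 := (hd.analyticAt hb).contDiffAt
  have hωa : ContDiffAt ℂ 2 ω 0 := (hωd.analyticAt hb).contDiffAt
  have hd1 : deriv p 0 = k * deriv ω 0 := by
    rw [hrel.deriv_eq, deriv_const_add, deriv_fun_mul, deriv_add_const, deriv_sub_const, hω0, h0]
    · ring
    · exact ((hpa.differentiableAt two_ne_zero).sub_const 1).add_const _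
    · exact hωa.differentiableAt two_ne_zero
  have hd2 : iteratedDeriv 2 p 0 = 2 * deriv p 0 * deriv ω 0 + k * iteratedDeriv 2 ω 0 := by
    rw [hrel.iteratedDeriv_eq, iteratedDeriv_const_add two_pos, iteratedDeriv_two_fun_mul
      ((hpa.sub contDiffAt_const).add contDiffAt_const) hωa, deriv_add_const, deriv_sub_const,
      hω0, h0]
    ring
  have hk0 : 0 ≤ k := by linarith
  have hk : ‖(k : ℂ)‖ = k := Complex.norm_of_nonneg hk0
  have h1 : ‖deriv ω 0‖ ≤ 1 := norm_deriv_le_one_of_mapsTo_ball hωd (by rwa [hω0]) one_pos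
  have h2 := norm_iteratedDeriv_two_le_of_mapsTo_ball hωd hω0 hωm
  have hn1 : ‖deriv p 0‖ = k * ‖deriv ω 0‖ := by rw [hd1, norm_mul, hk]
  refine ⟨by nlinarith, ?_⟩
  calc ‖iteratedDeriv 2 p 0‖ ≤ 2 * ‖deriv p 0‖ * ‖deriv ω 0‖ + k * ‖iteratedDeriv 2 ω 0‖ := by
        rw [hd2]
        refine (norm_add_le _ _).trans_eq ?_
        rw [norm_mul, norm_mul, norm_mul, hk, Complex.norm_two]
    _ ≤ 2 * k * ‖deriv ω 0‖ ^ 2 + k * (2 * (1 - ‖deriv ω 0‖ ^ 2)) := by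
        rw [hn1]; nlinarith [mul_le_mul_of_nonneg_left h2 hk0]
    _ = 4 * (1 - β) := by ring

theorem norm_iteratedDeriv_two_le_and_three_le_of_re_deriv_gt {F : ℂ → ℂ} {β : ℝ} (hβ : β < 1)
    (hd : AnalyticOnNhd ℂ F unitDisk) (h0 : deriv F 0 = 1)
    (hre : ∀ z ∈ unitDisk, β < (deriv F z).re) :
    ‖iteratedDeriv 2 F 0‖ ≤ 2 * (1 - β) ∧ ‖iteratedDeriv 3 F 0‖ ≤ 4 * (1 - β) := by
  rw [iteratedDeriv_succ' (n := 1), iteratedDeriv_succ' (n := 2), iteratedDeriv_one]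
  exact norm_deriv_le_and_norm_iteratedDeriv_two_le_of_re_gt hβ hd.deriv.differentiableOn h0 hre

theorem mc_two (f : ℂ → ℂ) : mc f 2 = iteratedDeriv 2 f 0 / 2 := by
  simp [mc]

theorem B_beta_a2_bound_general (β : ℝ) (hβ1 : β < 1) (f g : ℂ → ℂ)
    (hfg : BiUnivalentPair f g)
    (hf : ∀ z ∈ unitDisk, β < (deriv f z).re)
    (hg : ∀ w ∈ unitDisk, β < (deriv g w).re) :
    (β ≤ 1 / 3 → ‖mc f 2‖ ≤ Real.sqrt (2 * (1 - β) / 3)) ∧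
      (1 / 3 < β → ‖mc f 2‖ ≤ 1 - β) := by
  obtain ⟨hfa, -, hf', -, hga, -, hg0, hinv⟩ := hfg
  have h0 : (0 : ℂ) ∈ unitDisk := mem_ball_self one_pos
  have hid : f ∘ g =ᶠ[𝓝 0] id := by
    filter_upwards [ball_mem_nhds (0 : ℂ) (by norm_num : (0 : ℝ) < 1 / 4)] with w hw
    exact hinv w (mem_ball_zero_iff.1 hw)
  obtain ⟨hg', hg3⟩ := deriv_eq_one_and_iteratedDeriv_three_of_comp_eq_id
    (by rw [hg0]; exact (hfa 0 h0).contDiffAt) (hga 0 h0).contDiffAt hid (by rwa [hg0])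
  rw [hg0] at hg3
  obtain ⟨hf2, hf3⟩ := norm_iteratedDeriv_two_le_and_three_le_of_re_deriv_gt hβ1 hfa hf' hf
  obtain ⟨-, hg3'⟩ := norm_iteratedDeriv_two_le_and_three_le_of_re_deriv_gt hβ1 hga hg' hg
  have hsq : 3 * ‖iteratedDeriv 2 f 0‖ ^ 2 ≤ 8 * (1 - β) := by
    calc 3 * ‖iteratedDeriv 2 f 0‖ ^ 2
        = ‖iteratedDeriv 3 g 0 + iteratedDeriv 3 f 0‖ := by
          rw [hg3, sub_add_cancel, norm_mul, norm_pow]; norm_num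
      _ ≤ 8 * (1 - β) := by linarith [norm_add_le (iteratedDeriv 3 g 0) (iteratedDeriv 3 f 0)]
  rw [mc_two, norm_div, Complex.norm_two]
  refine ⟨fun _ => ?_, fun _ => by linarith⟩
  rw [Real.le_sqrt (by positivity) (by linarith)]
  nlinarith

/-- Corollary 2.2, bound for `|a₂|` in the class `B(β)` of Srivastava et al. -/
theorem B_beta_a2_bound (β : ℝ) (hβ0 : 0 ≤ β) (hβ1 : β < 1) (f g : ℂ → ℂ)
    (hfg : BiUnivalentPair f g)
    (hf : ∀ z ∈ unitDisk, β < (deriv f z).re)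
    (hg : ∀ w ∈ unitDisk, β < (deriv g w).re) :
    (β ≤ 1 / 3 → ‖mc f 2‖ ≤ Real.sqrt (2 * (1 - β) / 3)) ∧
      (1 / 3 < β → ‖mc f 2‖ ≤ 1 - β) :=
  B_beta_a2_bound_general β hβ1 f g hfg hf hg
end
end

section
/- Let 0 ≤ β < 1 and let f(z) = z + ∑_{n≥2} a_n z^n be bi-univalent with inverse g = f⁻¹, such that Re f'(z) > β for all z ∈ 𝔻 and Re g'(w) > β for all w ∈ 𝔻. Then |a₃| ≤ 2(1−β)/3 and |2a₂² − a₃| ≤ 2(1−β)/3. -/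
open MeasureTheory Set Metric Complex

noncomputable section

/-!
Both `f'` and `g'` map the disk into the half-plane `Re > β`, so Carathéodory's lemma
`‖pₙ‖ ≤ 2 Re p(0)` for the coefficients of a function `p` with `Re p ≥ 0`, applied to `f' - β` and
`g' - β`, bounds the third coefficients `a₃` of `f` and `b₃` of `g` by `2(1 - β)/3`.
Differentiating `f ∘ g = id` three times at `0` gives `b₃ = 2a₂² - a₃`.

Carathéodory's lemma comes from the Cauchy formula on a circle of radius `r < 1`: the `n`-th
coefficient is the circle average of `z⁻ⁿ p(z)`. For `n ≥ 1` the average of `zⁿ p(z)`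
vanishes, and `conj z = r² / z` on the circle, so the average of `z⁻ⁿ conj (p z)` vanishes too.
Hence the coefficient is the average of `z⁻ⁿ · 2 Re p(z)`, of norm at most `2 Re p(0) / rⁿ` by the
mean value property; let `r → 1`.
-/

open Filter Topology Real
open scoped Nat ComplexConjugate

theorem Real.norm_circleAverage_le {E : Type*} [NormedAddCommGroup E] [NormedSpace ℝ E]
    (f : ℂ → E) (c : ℂ) (R : ℝ) :
    ‖circleAverage f c R‖ ≤ circleAverage (fun z => ‖f z‖) c R := by
  rw [circleAverage_def, circleAverage_def, norm_smul, smul_eq_mul,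
    norm_of_nonneg (inv_pos.2 two_pi_pos).le]
  gcongr
  exact intervalIntegral.norm_integral_le_integral_norm two_pi_pos.le

theorem DifferentiableOn.circleAverage_eq_apply_center {E : Type*} [NormedAddCommGroup E]
    [NormedSpace ℂ E] [CompleteSpace E] {h : ℂ → E} {c : ℂ} {R : ℝ} (hR : 0 ≤ R)
    (hh : DifferentiableOn ℂ h (closedBall c R)) : circleAverage h c R = h c := by
  rw [← abs_of_nonneg hR] at hh
  exact (hh.diffContOnCl_ball subset_rfl).circleAverage

namespace Complex

section FixedRadius

variable {p : ℂ → ℂ} {r : ℝ} (hr : 0 < r) (hp : DifferentiableOn ℂ p (closedBall 0 r))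
include hr hp

theorem circleAverage_inv_pow_mul_eq_iteratedDeriv_div_factorial (n : ℕ) :
    circleAverage (fun z => (z ^ n)⁻¹ * p z) 0 r = iteratedDeriv n p 0 / n ! := by
  have hcauchy := hp.circleIntegral_one_div_sub_center_pow_smul hr n
  have hintegrand : (fun z => (z - 0)⁻¹ • ((z ^ n)⁻¹ * p z))
      = fun z => (1 / (z - 0) ^ (n + 1)) • p z := by
    ext z; simp only [sub_zero, smul_eq_mul, pow_succ, one_div, mul_inv]; ring
  rw [circleAverage_eq_circleIntegral hr.ne', hintegrand, hcauchy, smul_smul, smul_eq_mul]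
  field_simp [two_pi_I_ne_zero]

theorem circleAverage_pow_mul_eq_zero {n : ℕ} (hn : n ≠ 0) :
    circleAverage (fun z => z ^ n * p z) 0 r = 0 := by
  have hdiff : DifferentiableOn ℂ (fun z => z ^ n * p z) (closedBall 0 r) :=
    (differentiableOn_pow n).mul hp
  rw [hdiff.circleAverage_eq_apply_center hr.le]
  simp [hn]

theorem circleAverage_inv_pow_mul_conj_eq_zero {n : ℕ} (hn : n ≠ 0) :
    circleAverage (fun z => (z ^ n)⁻¹ * conj (p z)) 0 r = 0 := by
  have hsphere : Set.EqOn (fun z => (z ^ n)⁻¹ * conj (p z))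
      (fun z => ((r : ℂ) ^ (2 * n))⁻¹ • conjCLE (z ^ n * p z)) (sphere 0 |r|) := by
    intro z hz
    rw [abs_of_pos hr] at hz
    have hz0 : z ≠ 0 := ne_zero_of_mem_sphere hr.ne' ⟨z, hz⟩
    have hconj : conj z = (r : ℂ) ^ 2 / z := by
      rw [eq_div_iff hz0, mul_comm, mul_conj, normSq_eq_norm_sq, mem_sphere_zero_iff_norm.1 hz]
      push_cast; ring
    simp only [conjCLE_apply, map_mul, map_pow, hconj, smul_eq_mul, div_pow, ← pow_mul]
    have hr0 : (r : ℂ) ≠ 0 := ofReal_ne_zero.2 hr.ne'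
    field_simp
  have hint : CircleIntegrable (fun z => z ^ n * p z) 0 r :=
    ((continuous_pow n).continuousOn.mul
      (hp.continuousOn.mono sphere_subset_closedBall)).circleIntegrable hr.le
  have hcomm := (conjCLE : ℂ ≃L[ℝ] ℂ).toContinuousLinearMap.circleAverage_comp_comm hint
  simp only [Function.comp_def, ContinuousLinearEquiv.coe_coe] at hcomm
  rw [circleAverage_congr_sphere hsphere, circleAverage_fun_smul, hcomm,
    circleAverage_pow_mul_eq_zero hr hp hn, map_zero, smul_zero]

theorem circleAverage_re_eq_re :
    circleAverage (fun z => (p z).re) 0 r = (p 0).re := by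
  have hint : CircleIntegrable p 0 r :=
    (hp.continuousOn.mono sphere_subset_closedBall).circleIntegrable hr.le
  rw [← hp.circleAverage_eq_apply_center hr.le]
  exact reCLM.circleAverage_comp_comm hint

theorem iteratedDeriv_div_factorial_eq_circleAverage_re {n : ℕ} (hn : n ≠ 0) :
    iteratedDeriv n p 0 / n ! = circleAverage (fun z => (z ^ n)⁻¹ * (2 * (p z).re : ℝ)) 0 r := by
  have hcont : ContinuousOn (fun z : ℂ => (z ^ n)⁻¹) (sphere 0 r) :=
    (continuousOn_id.pow n).inv₀ fun z hz => pow_ne_zero n (ne_zero_of_mem_sphere hr.ne' ⟨z, hz⟩)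
  have hpc : ContinuousOn p (sphere 0 r) := hp.continuousOn.mono sphere_subset_closedBall
  have hsplit : (fun z => (z ^ n)⁻¹ * ((2 * (p z).re : ℝ) : ℂ))
      = fun z => (z ^ n)⁻¹ * p z + (z ^ n)⁻¹ * conj (p z) := by
    ext z; rw [← mul_add, add_conj]
  have hint : CircleIntegrable (fun z => (z ^ n)⁻¹ * p z) 0 r :=
    (hcont.mul hpc).circleIntegrable hr.le
  have hint' : CircleIntegrable (fun z => (z ^ n)⁻¹ * conj (p z)) 0 r :=
    (hcont.mul (continuous_conj.comp_continuousOn hpc)).circleIntegrable hr.le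
  rw [hsplit, circleAverage_fun_add hint hint',
    circleAverage_inv_pow_mul_conj_eq_zero hr hp hn, add_zero,
    circleAverage_inv_pow_mul_eq_iteratedDeriv_div_factorial hr hp]

theorem norm_iteratedDeriv_le_of_re_nonneg_on_sphere (hre : ∀ z ∈ sphere 0 r, 0 ≤ (p z).re)
    {n : ℕ} (hn : n ≠ 0) :
    ‖iteratedDeriv n p 0‖ ≤ 2 * n ! * (p 0).re / r ^ n := by
  have hsphere : Set.EqOn (fun z => ‖(z ^ n)⁻¹ * ((2 * (p z).re : ℝ) : ℂ)‖)
      (fun z => ((r ^ n)⁻¹ * 2) • (p z).re) (sphere 0 |r|) := by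
    intro z hz
    rw [abs_of_pos hr] at hz
    have := hre z hz
    simp only [norm_mul, norm_inv, norm_pow, mem_sphere_zero_iff_norm.1 hz, norm_real,
      Real.norm_eq_abs, abs_two, abs_of_nonneg this, smul_eq_mul, mul_assoc]
  have hbound := norm_circleAverage_le (fun z => (z ^ n)⁻¹ * ((2 * (p z).re : ℝ) : ℂ)) 0 r
  rw [← iteratedDeriv_div_factorial_eq_circleAverage_re hr hp hn,
    circleAverage_congr_sphere hsphere, circleAverage_fun_smul, circleAverage_re_eq_re hr hp, norm_div, norm_natCast,
    smul_eq_mul] at hbound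
  rw [div_le_iff₀ (by positivity)] at hbound
  exact hbound.trans_eq (by ring)

end FixedRadius

variable {R : ℝ} {n : ℕ}

theorem norm_iteratedDeriv_le_of_re_nonneg {p : ℂ → ℂ} (hR : 0 < R)
    (hp : DifferentiableOn ℂ p (ball 0 R)) (hre : ∀ z ∈ ball 0 R, 0 ≤ (p z).re) (hn : n ≠ 0) :
    ‖iteratedDeriv n p 0‖ ≤ 2 * n ! * (p 0).re / R ^ n := by
  have hlim : Tendsto (fun r : ℝ => 2 * n ! * (p 0).re / r ^ n) (𝓝[<] R)
      (𝓝 (2 * n ! * (p 0).re / R ^ n)) :=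
    ((continuousAt_const.div (continuousAt_id.pow n) (pow_ne_zero n hR.ne')).tendsto).mono_left
      nhdsWithin_le_nhds
  refine ge_of_tendsto hlim ?_
  filter_upwards [Ioo_mem_nhdsLT hR] with r ⟨hr0, hrR⟩
  have hsub : closedBall (0 : ℂ) r ⊆ ball 0 R := closedBall_subset_ball hrR
  exact norm_iteratedDeriv_le_of_re_nonneg_on_sphere hr0 (hp.mono hsub)
    (fun z hz => hre z (hsub (sphere_subset_closedBall hz))) hn

theorem norm_iteratedDeriv_le_of_le_re {u : ℂ → ℂ} {β : ℝ} (hR : 0 < R)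
    (hu : DifferentiableOn ℂ u (ball 0 R)) (hre : ∀ z ∈ ball 0 R, β ≤ (u z).re) (hn : n ≠ 0) :
    ‖iteratedDeriv n u 0‖ ≤ 2 * n ! * ((u 0).re - β) / R ^ n := by
  have h := norm_iteratedDeriv_le_of_re_nonneg (p := fun z => -(β : ℂ) + u z) hR
    ((differentiableOn_const _).add hu)
    (fun z hz => by simpa [sub_nonneg, neg_add_eq_sub] using hre z hz) hn
  rwa [iteratedDeriv_const_add (Nat.pos_of_ne_zero hn), add_re, neg_re, ofReal_re,
    neg_add_eq_sub] at h

end Complex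

section LeftInverse

variable {𝕜 : Type*} [NontriviallyNormedField 𝕜]

theorem Filter.EventuallyEq.eventuallyEq_of_hasDerivAt_s9 {E : Type*} [NormedAddCommGroup E]
    [NormedSpace 𝕜 E] {F G F' G' : 𝕜 → E} {b : 𝕜} (h : F =ᶠ[𝓝 b] G)
    (hF : ∀ᶠ w in 𝓝 b, HasDerivAt F (F' w) w) (hG : ∀ᶠ w in 𝓝 b, HasDerivAt G (G' w) w) :
    F' =ᶠ[𝓝 b] G' := by
  filter_upwards [h.deriv, hF, hG] with w hw hFw hGw
  rw [← hFw.deriv, ← hGw.deriv, hw]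

variable [CompleteSpace 𝕜] {f g : 𝕜 → 𝕜} {b : 𝕜}

theorem derivs_of_eventually_leftInverse (hf : AnalyticAt 𝕜 f (g b)) (hg : AnalyticAt 𝕜 g b)
    (hfg : ∀ᶠ w in 𝓝 b, f (g w) = w) :
    deriv f (g b) * deriv g b = 1 ∧
      deriv (deriv f) (g b) * deriv g b ^ 2 + deriv f (g b) * deriv (deriv g) b = 0 ∧
      deriv (deriv (deriv f)) (g b) * deriv g b ^ 3
        + 3 * deriv (deriv f) (g b) * deriv g b * deriv (deriv g) b
        + deriv f (g b) * deriv (deriv (deriv g)) b = 0 := by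
  have hA : ∀ᶠ w in 𝓝 b, AnalyticAt 𝕜 g w ∧ AnalyticAt 𝕜 f (g w) :=
    hg.eventually_analyticAt.and (hg.continuousAt.tendsto.eventually hf.eventually_analyticAt)
  have hcomp : ∀ {h : 𝕜 → 𝕜} {w : 𝕜}, AnalyticAt 𝕜 h (g w) → AnalyticAt 𝕜 g w →
      HasDerivAt (fun x => h (g x)) (deriv h (g w) * deriv g w) w :=
    fun hh hgw => hh.differentiableAt.hasDerivAt.comp _ hgw.differentiableAt.hasDerivAt
  have h1 : (fun w => deriv f (g w) * deriv g w) =ᶠ[𝓝 b] fun _ => 1 :=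
    Filter.EventuallyEq.eventuallyEq_of_hasDerivAt_s9 hfg (hA.mono fun w hw => hcomp hw.2 hw.1)
      (Eventually.of_forall fun w => hasDerivAt_id' w)
  have h2 : (fun w => deriv (deriv f) (g w) * deriv g w ^ 2
      + deriv f (g w) * deriv (deriv g) w) =ᶠ[𝓝 b] fun _ => 0 := by
    refine h1.eventuallyEq_of_hasDerivAt_s9 (hA.mono fun w hw => ?_)
      (Eventually.of_forall fun w => hasDerivAt_const w 1)
    refine ((hcomp hw.2.deriv hw.1).mul hw.1.deriv.differentiableAt.hasDerivAt).congr_deriv ?_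
    ring
  have h3 : (fun w => deriv (deriv (deriv f)) (g w) * deriv g w ^ 3
        + 3 * deriv (deriv f) (g w) * deriv g w * deriv (deriv g) w
        + deriv f (g w) * deriv (deriv (deriv g)) w) =ᶠ[𝓝 b] fun _ => 0 := by
    refine h2.eventuallyEq_of_hasDerivAt_s9 (hA.mono fun w hw => ?_)
      (Eventually.of_forall fun w => hasDerivAt_const w 0)
    have hg' := hw.1.deriv.differentiableAt.hasDerivAt
    have hg'' := hw.1.deriv.deriv.differentiableAt.hasDerivAt
    refine (((hcomp hw.2.deriv.deriv hw.1).mul (hg'.pow 2)).add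
      ((hcomp hw.2.deriv hw.1).mul hg'')).congr_deriv ?_
    simp only [Pi.pow_apply]
    push_cast
    ring
  exact ⟨h1.self_of_nhds, h2.self_of_nhds, h3.self_of_nhds⟩

theorem iteratedDeriv_three_of_eventually_leftInverse (hf : AnalyticAt 𝕜 f (g b))
    (hg : AnalyticAt 𝕜 g b) (hf1 : deriv f (g b) = 1) (hfg : ∀ᶠ w in 𝓝 b, f (g w) = w) :
    deriv g b = 1 ∧
      iteratedDeriv 3 g b = 3 * iteratedDeriv 2 f (g b) ^ 2 - iteratedDeriv 3 f (g b) := by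
  obtain ⟨h1, h2, h3⟩ := derivs_of_eventually_leftInverse hf hg hfg
  simp only [iteratedDeriv_succ, iteratedDeriv_zero]
  rw [hf1, one_mul] at h1
  rw [h1, hf1] at h2 h3
  have hg2 : deriv (deriv g) b = -deriv (deriv f) (g b) := by linear_combination h2
  rw [hg2] at h3
  exact ⟨h1, by linear_combination h3⟩

end LeftInverse

theorem norm_iteratedDeriv_three_le_of_lt_re_deriv {h : ℂ → ℂ} {β : ℝ}
    (hh : AnalyticOnNhd ℂ h unitDisk) (hβ : ∀ z ∈ unitDisk, β < (deriv h z).re)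
    (h1 : deriv h 0 = 1) : ‖iteratedDeriv 3 h 0‖ ≤ 4 * (1 - β) := by
  have hbound := Complex.norm_iteratedDeriv_le_of_le_re one_pos hh.deriv.differentiableOn
    (fun z hz => (hβ z hz).le) two_ne_zero
  rw [← iteratedDeriv_succ', h1] at hbound
  norm_num [Nat.factorial] at hbound
  linarith

theorem B_beta_a3_bounds_general (β : ℝ) (f g : ℂ → ℂ)
    (hfg : BiUnivalentPair f g)
    (hf : ∀ z ∈ unitDisk, β < (deriv f z).re)
    (hg : ∀ w ∈ unitDisk, β < (deriv g w).re) :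
    ‖mc f 3‖ ≤ 2 * (1 - β) / 3 ∧
      ‖2 * mc f 2 ^ 2 - mc f 3‖ ≤ 2 * (1 - β) / 3 := by
  obtain ⟨hfa, -, hf1, -, hga, -, hg0, hinv⟩ := hfg
  have h0 : (0 : ℂ) ∈ unitDisk := mem_ball_self one_pos
  have hleft : ∀ᶠ w in 𝓝 0, f (g w) = w := by
    filter_upwards [ball_mem_nhds (0 : ℂ) (by norm_num : (0 : ℝ) < 1 / 4)] with w hw
    exact hinv w (mem_ball_zero_iff.1 hw)
  obtain ⟨hg1, hg3⟩ := iteratedDeriv_three_of_eventually_leftInverse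
    (by rw [hg0]; exact hfa 0 h0) (hga 0 h0) (by rwa [hg0]) hleft
  rw [hg0] at hg3
  have hmc2 : mc f 2 = iteratedDeriv 2 f 0 / 2 := by simp [mc]
  have hmc3 : mc f 3 = iteratedDeriv 3 f 0 / 6 := by simp [mc, Nat.factorial]
  have hb3 : 2 * mc f 2 ^ 2 - mc f 3 = iteratedDeriv 3 g 0 / 6 := by
    rw [hmc2, hmc3, hg3]; ring
  rw [hb3, hmc3, norm_div, norm_div, show ‖(6 : ℂ)‖ = 6 by norm_num]
  constructor <;> linarith [norm_iteratedDeriv_three_le_of_lt_re_deriv hfa hf hf1,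
    norm_iteratedDeriv_three_le_of_lt_re_deriv hga hg hg1]

/-- Corollary 2.2, bounds for `|a₃|` and `|2a₂² - a₃|` in the class `B(β)` of
Srivastava et al. -/
theorem B_beta_a3_bounds (β : ℝ) (hβ0 : 0 ≤ β) (hβ1 : β < 1) (f g : ℂ → ℂ)
    (hfg : BiUnivalentPair f g)
    (hf : ∀ z ∈ unitDisk, β < (deriv f z).re)
    (hg : ∀ w ∈ unitDisk, β < (deriv g w).re) :
    ‖mc f 3‖ ≤ 2 * (1 - β) / 3 ∧
      ‖2 * mc f 2 ^ 2 - mc f 3‖ ≤ 2 * (1 - β) / 3 :=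
  B_beta_a3_bounds_general β f g hfg hf hg
end
end
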